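/- For x ≠ y in ℝ² and λ > 0, the Yukawa Green's function G(x,y) = −(1/(2π))K₀(λ‖x−y‖) satisfies (Δₓ − λ²)G(x,y) = 0. -/

import Mathlib

open Real MeasureTheory

/-- Modified Bessel function of the second kind of order zero,
via the integral representation `K₀(x) = ∫₀^∞ exp(-x cosh t) dt`. -/
noncomputable def K0 (x : ℝ) : ℝ :=
  ∫ t in Set.Ioi (0 : ℝ), Real.exp (-x * Real.cosh t)

/-- Modified Bessel function of the second kind of order one,
via the integral representation `K₁(x) = ∫₀^∞ exp(-x cosh t) cosh t dt`. -/
noncomputable def K1 (x : ℝ) : ℝ :=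
  ∫ t in Set.Ioi (0 : ℝ), Real.exp (-x * Real.cosh t) * Real.cosh t

/-- Euclidean distance on `ℝ × ℝ`. -/
noncomputable def dist2 (x y : ℝ × ℝ) : ℝ :=
  Real.sqrt ((x.1 - y.1) ^ 2 + (x.2 - y.2) ^ 2)

/-- First partial derivative. -/
noncomputable def pd1 (f : ℝ × ℝ → ℝ) (p : ℝ × ℝ) : ℝ :=
  deriv (fun t => f (t, p.2)) p.1

/-- Second partial derivative. -/
noncomputable def pd2 (f : ℝ × ℝ → ℝ) (p : ℝ × ℝ) : ℝ :=
  deriv (fun t => f (p.1, t)) p.2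

/-- Laplacian on `ℝ²`. -/
noncomputable def lap (f : ℝ × ℝ → ℝ) (p : ℝ × ℝ) : ℝ :=
  pd1 (pd1 f) p + pd2 (pd2 f) p

/-! Writing `Mₙ(x) = ∫₀^∞ e^{-x cosh t} coshⁿ t`, so that `K₀ = M₀` and `K₁ = M₁`,
differentiation under the integral sign gives `Mₙ' = -Mₙ₊₁`, and integrating
`(e^{-x cosh t} sinh t)'` over `(0, ∞)` gives `M₂ = M₀ + M₁ / x`: this is the modified Bessel
equation `K₀'' + K₀' / x = K₀`. On the other hand, the Laplacian in `ℝ²` of a radial function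
`f (|x - y|)` is `f'' + f' / r` away from `y`, so `f(r) = K₀(λ r)` satisfies `Δf = λ² f`. -/

open Filter Set Topology
open scoped Nat

noncomputable def coshMoment (n : ℕ) (x : ℝ) : ℝ :=
  ∫ t in Ioi (0 : ℝ), exp (-x * cosh t) * cosh t ^ n

lemma K0_eq_coshMoment_zero : K0 = coshMoment 0 := by
  funext x; simp [K0, coshMoment]

lemma K1_eq_coshMoment_one : K1 = coshMoment 1 := by
  funext x; simp [K1, coshMoment]

lemma sq_div_four_le_cosh (t : ℝ) : t ^ 2 / 4 ≤ cosh t := by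
  have h := Real.pow_div_factorial_le_exp _ (abs_nonneg t) 2
  rw [sq_abs] at h
  rw [← cosh_abs, cosh_eq]
  norm_num [Nat.factorial] at h
  nlinarith [exp_pos (-|t|)]

lemma pow_mul_exp_neg_mul_le {a c : ℝ} (ha : 0 < a) (hc : 0 ≤ c) (n : ℕ) :
    c ^ n * exp (-a * c) ≤ n ! / a ^ n := by
  have h := Real.pow_div_factorial_le_exp _ (mul_nonneg ha.le hc) n
  rw [div_le_iff₀ (by positivity), mul_pow] at h
  rw [le_div_iff₀ (by positivity), neg_mul, exp_neg]
  calc c ^ n * (exp (a * c))⁻¹ * a ^ n = a ^ n * c ^ n * (exp (a * c))⁻¹ := by ring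
    _ ≤ exp (a * c) * n ! * (exp (a * c))⁻¹ := by gcongr
    _ = n ! := by field_simp

lemma exp_neg_mul_cosh_mul_pow_le {x x' : ℝ} (hx : 0 < x) (hx' : x / 2 ≤ x') (n : ℕ) (t : ℝ) :
    exp (-x' * cosh t) * cosh t ^ n ≤ n ! / (x / 4) ^ n * exp (-(x / 16) * t ^ 2) := by
  have hc : 0 ≤ cosh t := (cosh_pos t).le
  have hsplit : -x' * cosh t ≤ -(x / 4) * cosh t + -(x / 4) * cosh t := by nlinarith
  have hgauss : -(x / 4) * cosh t ≤ -(x / 16) * t ^ 2 := by nlinarith [sq_div_four_le_cosh t]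
  calc exp (-x' * cosh t) * cosh t ^ n
      ≤ exp (-(x / 4) * cosh t + -(x / 4) * cosh t) * cosh t ^ n := by gcongr
    _ = exp (-(x / 4) * cosh t) * (cosh t ^ n * exp (-(x / 4) * cosh t)) := by
        rw [exp_add]; ring
    _ ≤ exp (-(x / 16) * t ^ 2) * (n ! / (x / 4) ^ n) := by
        gcongr; exact pow_mul_exp_neg_mul_le (by positivity) hc n
    _ = n ! / (x / 4) ^ n * exp (-(x / 16) * t ^ 2) := mul_comm _ _

lemma integrableOn_exp_neg_mul_cosh_mul_pow {x : ℝ} (hx : 0 < x) (n : ℕ) :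
    IntegrableOn (fun t => exp (-x * cosh t) * cosh t ^ n) (Ioi 0) := by
  refine Integrable.mono' ((integrable_exp_neg_mul_sq (by positivity : 0 < x / 16)).const_mul
    (n ! / (x / 4) ^ n)).integrableOn (Continuous.aestronglyMeasurable (by fun_prop))
    (Eventually.of_forall fun t => ?_)
  rw [norm_of_nonneg (by positivity)]
  exact exp_neg_mul_cosh_mul_pow_le hx (by linarith) n t

lemma hasDerivAt_coshMoment (n : ℕ) {x : ℝ} (hx : 0 < x) :
    HasDerivAt (coshMoment n) (-coshMoment (n + 1) x) x := by
  have h := hasDerivAt_integral_of_dominated_loc_of_deriv_le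
    (μ := volume.restrict (Ioi 0)) (Metric.ball_mem_nhds x (half_pos hx))
    (F := fun x t => exp (-x * cosh t) * cosh t ^ n)
    (F' := fun x t => -(exp (-x * cosh t) * cosh t ^ (n + 1)))
    (Eventually.of_forall fun _ => (by fun_prop : Continuous _).aestronglyMeasurable)
    (integrableOn_exp_neg_mul_cosh_mul_pow hx n) (by fun_prop : Continuous _).aestronglyMeasurable
    (Eventually.of_forall fun t x' hx' => ?_)
    ((integrable_exp_neg_mul_sq (by positivity : 0 < x / 16)).const_mul
      ((n + 1)! / (x / 4) ^ (n + 1))).integrableOn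
    (Eventually.of_forall fun t x' _ => ?_)
  · rw [integral_neg] at h
    exact h.2
  · rw [norm_neg, norm_of_nonneg (by positivity)]
    have := (abs_lt.1 (Real.dist_eq x' x ▸ Metric.mem_ball.1 hx')).1
    exact exp_neg_mul_cosh_mul_pow_le hx (by linarith) (n + 1) t
  · exact (((hasDerivAt_neg x').mul_const (cosh t)).exp.mul_const (cosh t ^ n)).congr_deriv
      (by ring)

/-- Integration by parts against `d/dt (exp (-x cosh t) sinh t)`; with `K₀' = -K₁` and
`K₁' = -coshMoment 2` this is the modified Bessel equation of order zero. -/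
lemma coshMoment_two_eq {x : ℝ} (hx : 0 < x) :
    coshMoment 2 x = coshMoment 0 x + coshMoment 1 x / x := by
  set g : ℝ → ℝ := fun t => exp (-x * cosh t) * sinh t
  have hM := fun n => integrableOn_exp_neg_mul_cosh_mul_pow hx n
  have hg : ∀ t, HasDerivAt g (exp (-x * cosh t) * cosh t ^ 1
      - x * (exp (-x * cosh t) * cosh t ^ 2) + x * (exp (-x * cosh t) * cosh t ^ 0)) t := by
    intro t
    refine (((hasDerivAt_cosh t).const_mul (-x)).exp.mul (hasDerivAt_sinh t)).congr_deriv ?_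
    linear_combination (-x * exp (-x * cosh t)) * sinh_sq t
  have hg' : IntegrableOn (fun t => exp (-x * cosh t) * cosh t ^ 1
      - x * (exp (-x * cosh t) * cosh t ^ 2) + x * (exp (-x * cosh t) * cosh t ^ 0)) (Ioi 0) :=
    ((hM 1).sub ((hM 2).const_mul x)).add ((hM 0).const_mul x)
  have hg_int : IntegrableOn g (Ioi 0) := by
    refine (hM 1).mono' (by fun_prop : Continuous g).aestronglyMeasurable.restrict
      (Eventually.of_forall fun t => ?_)
    rw [norm_mul, norm_of_nonneg (exp_pos _).le, pow_one, Real.norm_eq_abs, abs_sinh,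
      ← cosh_abs]
    gcongr
    exact (sinh_lt_cosh _).le
  have hibp := integral_Ioi_of_hasDerivAt_of_tendsto' (fun t _ => hg t) hg'
    (tendsto_zero_of_hasDerivAt_of_integrableOn_Ioi (fun t _ => hg t) hg' hg_int)
  rw [integral_add ?i1 ?i2, integral_sub ?i3 ?i4, integral_const_mul, integral_const_mul] at hibp
  case i1 => exact (hM 1).sub ((hM 2).const_mul x)
  case i2 => exact (hM 0).const_mul x
  case i3 => exact hM 1
  case i4 => exact (hM 2).const_mul x
  change coshMoment 1 x - x * coshMoment 2 x + x * coshMoment 0 x = 0 - g 0 at hibp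
  simp only [g, sinh_zero, mul_zero, sub_zero] at hibp
  field_simp
  linarith

lemma dist2_sq (p y : ℝ × ℝ) : dist2 p y ^ 2 = (p.1 - y.1) ^ 2 + (p.2 - y.2) ^ 2 :=
  sq_sqrt (by positivity)

lemma dist2_pos {p y : ℝ × ℝ} (h : p ≠ y) : 0 < dist2 p y := by
  refine sqrt_pos.2 ?_
  rcases eq_or_ne p.1 y.1 with h1 | h1
  · have : p.2 - y.2 ≠ 0 := sub_ne_zero.2 fun h2 => h (Prod.ext h1 h2)
    positivity
  · have : p.1 - y.1 ≠ 0 := sub_ne_zero.2 h1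
    positivity

lemma dist2_swap (p y : ℝ × ℝ) : dist2 p.swap y.swap = dist2 p y := by
  simp only [dist2, Prod.fst_swap, Prod.snd_swap, add_comm]

lemma hasDerivAt_dist2_fst {p y : ℝ × ℝ} (h : p ≠ y) :
    HasDerivAt (fun t => dist2 (t, p.2) y) ((p.1 - y.1) / dist2 p y) p.1 := by
  have hr := dist2_pos h
  have hsq : HasDerivAt (fun t : ℝ => (t - y.1) ^ 2 + (p.2 - y.2) ^ 2) (2 * (p.1 - y.1)) p.1 := by
    simpa using (((hasDerivAt_id p.1).sub_const y.1).pow 2).add_const ((p.2 - y.2) ^ 2)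
  refine (hsq.sqrt ?_).congr_deriv ?_
  · rw [← dist2_sq]; positivity
  · change 2 * (p.1 - y.1) / (2 * dist2 p y) = _
    field_simp

lemma pd1_comp_dist2 {f f' : ℝ → ℝ} {p y : ℝ × ℝ} (h : p ≠ y)
    (hf : HasDerivAt f (f' (dist2 p y)) (dist2 p y)) :
    pd1 (fun q => f (dist2 q y)) p = f' (dist2 p y) * ((p.1 - y.1) / dist2 p y) :=
  (hf.comp p.1 (hasDerivAt_dist2_fst h)).deriv

lemma pd1_pd1_comp_dist2 {f f' : ℝ → ℝ} {f'' : ℝ} {p y : ℝ × ℝ} (h : p ≠ y)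
    (hf : ∀ s > 0, HasDerivAt f (f' s) s) (hf' : HasDerivAt f' f'' (dist2 p y)) :
    pd1 (pd1 fun q => f (dist2 q y)) p = f'' * (p.1 - y.1) ^ 2 / dist2 p y ^ 2
      + f' (dist2 p y) * (dist2 p y ^ 2 - (p.1 - y.1) ^ 2) / dist2 p y ^ 3 := by
  have hr := dist2_pos h
  have hne : ∀ᶠ t in 𝓝 p.1, (t, p.2) ≠ y :=
    (continuous_id.prodMk continuous_const).continuousAt.eventually (isOpen_ne.mem_nhds h)
  have hpd1 : (fun t => pd1 (fun q => f (dist2 q y)) (t, p.2)) =ᶠ[𝓝 p.1]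
      fun t => f' (dist2 (t, p.2) y) * ((t - y.1) / dist2 (t, p.2) y) :=
    hne.mono fun t ht => pd1_comp_dist2 ht (hf _ (dist2_pos ht))
  have hderiv : HasDerivAt (fun t => f' (dist2 (t, p.2) y) * ((t - y.1) / dist2 (t, p.2) y)) _
      p.1 := (hf'.comp p.1 (hasDerivAt_dist2_fst h)).mul
    (((hasDerivAt_id p.1).sub_const y.1).div (hasDerivAt_dist2_fst h) hr.ne')
  rw [pd1, hpd1.deriv_eq, hderiv.deriv]
  simp only [Function.comp_apply, id]
  field_simp

lemma pd2_pd2_eq_pd1_pd1_swap (F : ℝ × ℝ → ℝ) (p : ℝ × ℝ) :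
    pd2 (pd2 F) p = pd1 (pd1 fun q => F q.swap) p.swap := rfl

lemma lap_comp_dist2 {f f' : ℝ → ℝ} {f'' : ℝ} {p y : ℝ × ℝ} (h : p ≠ y)
    (hf : ∀ s > 0, HasDerivAt f (f' s) s) (hf' : HasDerivAt f' f'' (dist2 p y)) :
    lap (fun q => f (dist2 q y)) p = f'' + f' (dist2 p y) / dist2 p y := by
  have hr := dist2_pos h
  have hswap : (fun q : ℝ × ℝ => f (dist2 q.swap y)) = fun q => f (dist2 q y.swap) := by
    funext q; rw [← dist2_swap, Prod.swap_swap]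
  have h' : p.swap ≠ y.swap := fun hs => h (Prod.swap_injective hs)
  rw [lap, pd2_pd2_eq_pd1_pd1_swap, hswap, pd1_pd1_comp_dist2 h hf hf',
    pd1_pd1_comp_dist2 h' hf (by rwa [dist2_swap]), dist2_swap]
  have hsq := dist2_sq p y
  simp only [Prod.fst_swap]
  field_simp
  linear_combination (f' (dist2 p y) - f'' * dist2 p y) * hsq

lemma hasDerivAt_K0 {s : ℝ} (hs : 0 < s) : HasDerivAt K0 (-K1 s) s := by
  rw [K0_eq_coshMoment_zero, K1_eq_coshMoment_one]
  exact hasDerivAt_coshMoment 0 hs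

lemma hasDerivAt_K1 {s : ℝ} (hs : 0 < s) : HasDerivAt K1 (-coshMoment 2 s) s := by
  rw [K1_eq_coshMoment_one]
  exact hasDerivAt_coshMoment 1 hs

/-- The Yukawa Green's function `G(x,y) = -(1/(2π)) K₀(λ‖x-y‖)` satisfies
`(Δₓ - λ²) G(x,y) = 0` for `x ≠ y`. -/
theorem stmt2 (lam : ℝ) (hlam : 0 < lam) (x y : ℝ × ℝ) (hxy : x ≠ y) :
    lap (fun x' => -(1 / (2 * π)) * K0 (lam * dist2 x' y)) x
      - lam ^ 2 * (-(1 / (2 * π)) * K0 (lam * dist2 x y)) = 0 := by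
  set c := -(1 / (2 * π))
  have hr := dist2_pos hxy
  have hf : ∀ s > 0, HasDerivAt (fun s => c * K0 (lam * s)) (c * (-K1 (lam * s) * lam)) s :=
    fun s hs => (((hasDerivAt_K0 (by positivity)).comp s
      ((hasDerivAt_id s).const_mul lam)).const_mul c).congr_deriv (by simp)
  have hf' : HasDerivAt (fun s => c * (-K1 (lam * s) * lam))
      (c * (coshMoment 2 (lam * dist2 x y) * lam * lam)) (dist2 x y) :=
    ((((hasDerivAt_K1 (by positivity)).comp (dist2 x y)
      ((hasDerivAt_id _).const_mul lam)).neg.mul_const lam).const_mul c).congr_deriv (by simp)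
  rw [lap_comp_dist2 hxy hf hf', coshMoment_two_eq (by positivity), ← K0_eq_coshMoment_zero,
    ← K1_eq_coshMoment_one]
  field_simp
  ring
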